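/- For any pushdown automaton, the language it accepts can be expressed as h(R ∩ D_k) for some regular language R, Dyck language D_k, and free-monoid homomorphism h (Chomsky–Schützenberger theorem); hence any device that accepts all regular languages, all Dyck languages, is closed under intersection of a regular language with a Dyck language, and under homomorphic image, accepts all context-free languages. -/

import Mathlib

/-!
Give a pair of brackets to every position in the right-hand side of every rule of a grammar, and
encode a parse tree by the bracket word of its depth-first traversal, the subtree at a position
being enclosed in that position's brackets. These words are Dyck words, and erasing all brackets
except the opening ones of terminal positions (which become their terminal) recovers the yield.
Whether a word arises this way is decided by its pairs of adjacent brackets alone, once a virtual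
outer pair of brackets for the start symbol is added, so these words form a regular (local)
language. Conversely, each bracket determines the sentential form still to be derived just before
and just after it at its own level; for admissible neighbours `p q` the form after `p` derives
the form before `q`, and induction along the Dyck structure glues these steps into a derivation of
the image of any admissible Dyck word.
-/

/-- The `k`-symbol Dyck language `D_k` over the alphabet `Fin k × Bool` (`(i, true)` = `aᵢ`,
`(i, false)` = `bᵢ`). -/
inductive DyckK (k : ℕ) : List (Fin k × Bool) → Prop
  | nil : DyckK k []
  | wrap (i : Fin k) {x : List (Fin k × Bool)} :
      DyckK k x → DyckK k ((i, true) :: x ++ [(i, false)])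
  | append {x y : List (Fin k × Bool)} : DyckK k x → DyckK k y → DyckK k (x ++ y)

theorem List.exists_of_drop_eq_cons {α : Type*} {l u : List α} {i : ℕ} {x : α}
    (h : l.drop i = x :: u) : ∃ hi : i < l.length, l[i] = x ∧ l.drop (i + 1) = u := by
  have hi : i < l.length := by
    by_contra hle
    rw [List.drop_eq_nil_iff.mpr (Nat.le_of_not_lt hle)] at h
    exact List.cons_ne_nil x u h.symm
  rw [List.drop_eq_getElem_cons hi, List.cons.injEq] at h
  exact ⟨hi, h⟩

namespace Language

variable {α : Type*} {σ : Type}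

/-- The state is the image under `f` of the last letter read (initially `a`); `none` is a dead
state. -/
noncomputable def chainDFA (P : σ → σ → Prop) (f : α → σ) (a b : σ) : DFA α (Option σ) := by
  classical exact
  { step := fun o x => o.bind fun s => if P s (f x) then some (f x) else none
    start := some a
    accept := {o | ∃ s ∈ o, P s b} }

theorem chainDFA_evalFrom_none (P : σ → σ → Prop) (f : α → σ) (a b : σ) (w : List α) :
    (chainDFA P f a b).evalFrom none w = none := by
  induction w with
  | nil => rfl
  | cons x w ih => exact ih

theorem chainDFA_evalFrom_some_mem_accept (P : σ → σ → Prop) (f : α → σ) (a b s : σ)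
    (w : List α) :
    (chainDFA P f a b).evalFrom (some s) w ∈ (chainDFA P f a b).accept ↔
      List.IsChain P (s :: w.map f ++ [b]) := by
  induction w generalizing s with
  | nil => simp [chainDFA]
  | cons x w ih =>
    classical
    by_cases hs : P s (f x)
    · simpa [chainDFA, DFA.evalFrom_cons, hs] using ih (f x)
    · have hdead : (chainDFA P f a b).step (some s) x = none := by simp [chainDFA, hs]
      rw [DFA.evalFrom_cons, hdead, chainDFA_evalFrom_none]
      simp [chainDFA, hs]

theorem isRegular_setOf_isChain [Fintype σ] (P : σ → σ → Prop) (f : α → σ) (a b : σ) :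
    IsRegular {w : List α | List.IsChain P (a :: w.map f ++ [b])} :=
  ⟨Option σ, inferInstance, chainDFA P f a b, Set.ext fun w =>
    chainDFA_evalFrom_some_mem_accept P f a b a w⟩

end Language

theorem DyckK.eq_nil_or_eq_cons_append {k : ℕ} {w : List (Fin k × Bool)} (hw : DyckK k w) :
    w = [] ∨ ∃ a x y, DyckK k x ∧ DyckK k y ∧ w = (a, true) :: (x ++ (a, false) :: y) := by
  induction hw with
  | nil => exact Or.inl rfl
  | wrap i hx _ => exact Or.inr ⟨i, _, [], hx, DyckK.nil, by simp⟩
  | append hx hy ihx ihy =>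
    rcases ihx with rfl | ⟨a, x', y', hx', hy', rfl⟩
    · simpa using ihy
    · exact Or.inr ⟨a, x', y' ++ _, hx', hy'.append hy, by simp⟩

@[elab_as_elim]
theorem DyckK.cons_induction {k : ℕ} {motive : (w : List (Fin k × Bool)) → DyckK k w → Prop}
    (nil : motive [] .nil)
    (cons : ∀ a x y (hx : DyckK k x) (hy : DyckK k y), motive x hx → motive y hy →
      motive ((a, true) :: (x ++ (a, false) :: y)) (by simpa using (hx.wrap a).append hy))
    {w : List (Fin k × Bool)} (hw : DyckK k w) : motive w hw := by
  induction h : w.length using Nat.strong_induction_on generalizing w with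
  | _ n ih =>
    rcases hw.eq_nil_or_eq_cons_append with rfl | ⟨a, x, y, hx, hy, rfl⟩
    · exact nil
    · simp only [List.length_cons, List.length_append] at h
      exact cons a x y hx hy (ih _ (by omega) hx rfl) (ih _ (by omega) hy rfl)

namespace ContextFreeGrammar

variable {T : Type} {g : ContextFreeGrammar T}

/-- `g.Yields u w`: a forest of parse trees of `g` with roots `u` and frontier `w`. -/
inductive Yields (g : ContextFreeGrammar T) : List (Symbol T g.NT) → List T → Prop
  | nil : Yields g [] []
  | terminal (a : T) {u : List (Symbol T g.NT)} {w : List T} :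
      Yields g u w → Yields g (.terminal a :: u) (a :: w)
  | nonterminal {r : ContextFreeRule T g.NT} (hr : r ∈ g.rules) {u : List (Symbol T g.NT)}
      {w₁ w₂ : List T} :
      Yields g r.output w₁ → Yields g u w₂ → Yields g (.nonterminal r.input :: u) (w₁ ++ w₂)

namespace Yields

theorem append {u₁ u₂ : List (Symbol T g.NT)} {w₁ w₂ : List T} (h₁ : g.Yields u₁ w₁)
    (h₂ : g.Yields u₂ w₂) : g.Yields (u₁ ++ u₂) (w₁ ++ w₂) := by
  induction h₁ with
  | nil => exact h₂
  | terminal a _ ih => exact .terminal a ih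
  | nonterminal hr h _ _ ih => simpa using .nonterminal hr h ih

theorem exists_of_append {u₁ u₂ : List (Symbol T g.NT)} {w : List T}
    (h : g.Yields (u₁ ++ u₂) w) :
    ∃ w₁ w₂, w = w₁ ++ w₂ ∧ g.Yields u₁ w₁ ∧ g.Yields u₂ w₂ := by
  induction u₁ generalizing w with
  | nil => exact ⟨[], w, rfl, .nil, h⟩
  | cons X u₁ ih =>
    cases h with
    | terminal a h =>
      obtain ⟨w₁, w₂, rfl, h₁, h₂⟩ := ih h
      exact ⟨a :: w₁, w₂, rfl, .terminal a h₁, h₂⟩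
    | nonterminal hr hr' h =>
      obtain ⟨w₁, w₂, rfl, h₁, h₂⟩ := ih h
      exact ⟨_ ++ w₁, w₂, by simp, .nonterminal hr hr' h₁, h₂⟩

theorem map_terminal (w : List T) : g.Yields (w.map .terminal) w := by
  induction w with
  | nil => exact .nil
  | cons a w ih => exact .terminal a ih

theorem of_produces {u v : List (Symbol T g.NT)} {w : List T} (huv : g.Produces u v)
    (h : g.Yields v w) : g.Yields u w := by
  obtain ⟨r, hr, hrw⟩ := huv
  obtain ⟨p, q, rfl, rfl⟩ := hrw.exists_parts
  obtain ⟨w₁₂, w₃, rfl, h₁₂, h₃⟩ := exists_of_append h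
  obtain ⟨w₁, w₂, rfl, h₁, h₂⟩ := exists_of_append h₁₂
  simpa using h₁.append (.nonterminal hr h₂ h₃)

theorem of_derives {u : List (Symbol T g.NT)} {w : List T}
    (h : g.Derives u (w.map .terminal)) : g.Yields u w := by
  induction h using Relation.ReflTransGen.head_induction_on with
  | refl => exact map_terminal w
  | head huv _ ih => exact of_produces huv ih

theorem exists_of_nonterminal {A : g.NT} {w : List T} (h : g.Yields [.nonterminal A] w) :
    ∃ r ∈ g.rules, r.input = A ∧ g.Yields r.output w := by
  cases h with
  | nonterminal hr h h' =>
    cases h'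
    exact ⟨_, hr, rfl, by simpa using h⟩

end Yields

variable (g) in
/-- Each position gets a pair of brackets. -/
abbrev Pos : Type := Σ r : g.rules, Fin r.1.output.length

variable (g) in
/-- A slot is a position, or `none`: a virtual position holding the start symbol. -/
def sym : Option g.Pos → Symbol T g.NT
  | none => .nonterminal g.initial
  | some ⟨r, i⟩ => r.1.output[i]

variable (g) in
def following : Option g.Pos → List (Symbol T g.NT)
  | none => []
  | some ⟨r, i⟩ => r.1.output.drop (i + 1)

variable (g) in
def emit (s : Option g.Pos) : List T :=
  match g.sym s with
  | .terminal a => [a]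
  | .nonterminal _ => []

variable (g) in
/-- What is left to derive inside a slot once its opening bracket has emitted `g.emit s`. -/
def pending (s : Option g.Pos) : List (Symbol T g.NT) :=
  match g.sym s with
  | .terminal _ => []
  | .nonterminal A => [.nonterminal A]

theorem map_emit_append_pending (s : Option g.Pos) :
    (g.emit s).map .terminal ++ g.pending s = [g.sym s] := by
  unfold emit pending
  split <;> simp_all

theorem sym_cons_following (r : g.rules) (i : Fin r.1.output.length) :
    g.sym (some ⟨r, i⟩) :: g.following (some ⟨r, i⟩) = r.1.output.drop i :=
  (List.drop_eq_getElem_cons i.2).symm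

variable (g) in
/-- The pairs of brackets that may be adjacent in the encoding of a parse tree; `(s, true)` and
`(s, false)` are the opening and closing bracket of slot `s`. -/
inductive Adj : Option g.Pos × Bool → Option g.Pos × Bool → Prop
  | terminal {s : Option g.Pos} {a : T} : g.sym s = .terminal a → Adj (s, true) (s, false)
  | erase {s : Option g.Pos} (r : g.rules) :
      g.sym s = .nonterminal r.1.input → r.1.output = [] → Adj (s, true) (s, false)
  | enter {s : Option g.Pos} (r : g.rules) (h : 0 < r.1.output.length) :
      g.sym s = .nonterminal r.1.input → Adj (s, true) (some ⟨r, ⟨0, h⟩⟩, true)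
  | next (r : g.rules) (i : ℕ) (h : i + 1 < r.1.output.length) :
      Adj (some ⟨r, ⟨i, Nat.lt_of_succ_lt h⟩⟩, false) (some ⟨r, ⟨i + 1, h⟩⟩, true)
  | exit {s : Option g.Pos} (r : g.rules) (i : Fin r.1.output.length)
      (h : i.1 + 1 = r.1.output.length) :
      g.sym s = .nonterminal r.1.input → Adj (some ⟨r, i⟩, false) (s, false)

variable (g) in
/-- The sentential form still to be derived, at the level of the bracket, just after it. -/
def after : Option g.Pos × Bool → List (Symbol T g.NT)
  | (s, true) => g.pending s
  | (s, false) => g.following s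

variable (g) in
/-- The sentential form still to be derived, at the level of the bracket, just before it. -/
def before : Option g.Pos × Bool → List (Symbol T g.NT)
  | (s, true) => g.sym s :: g.following s
  | (_, false) => []

theorem before_open (s : Option g.Pos) :
    g.before (s, true) = (g.emit s).map .terminal ++ g.after (s, true) ++ g.after (s, false) := by
  rw [after, after, map_emit_append_pending]
  rfl

theorem Adj.derives_after_before {p q : Option g.Pos × Bool} (h : g.Adj p q) :
    g.Derives (g.after p) (g.before q) := by
  cases h with
  | terminal hs => simp [after, before, pending, hs]; rfl
  | erase r hs hr =>
    simp only [after, before, pending, hs]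
    have h := ContextFreeRule.Rewrites.input_output (r := r.1)
    rw [hr] at h
    exact Produces.single ⟨r.1, r.2, h⟩
  | enter r h hs =>
    simp only [after, before, pending, hs, sym_cons_following, List.drop_zero]
    exact Produces.single ⟨r.1, r.2, ContextFreeRule.Rewrites.input_output⟩
  | next r i h =>
    simp only [after, before, sym_cons_following]
    rfl
  | exit r i h hs =>
    simp only [after, before, following, List.drop_eq_nil_iff.mpr h.ge]
    rfl

variable {k : ℕ}

variable (g) in
def lift (e : g.Pos ≃ Fin k) (x : Fin k × Bool) : Option g.Pos × Bool :=
  (some (e.symm x.1), x.2)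

variable (g) in
def hom (e : g.Pos ≃ Fin k) (x : Fin k × Bool) : List T :=
  if x.2 then g.emit (some (e.symm x.1)) else []

theorem derives_of_isChain (e : g.Pos ≃ Fin k) {v : List (Fin k × Bool)} (hv : DyckK k v)
    {p q : Option g.Pos × Bool} (hc : List.IsChain g.Adj (p :: v.map (g.lift e) ++ [q])) :
    g.Derives (g.after p) ((v.flatMap (g.hom e)).map .terminal ++ g.before q) := by
  induction hv using DyckK.cons_induction generalizing p q with
  | nil => exact (List.isChain_pair.mp hc).derives_after_before
  | cons a x y _ _ ihx ihy =>
    set t := e.symm a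
    simp only [List.map_cons, List.map_append, lift, List.cons_append, List.append_assoc] at hc
    rw [List.isChain_cons_cons, List.isChain_cons_split] at hc
    obtain ⟨hp, hcx, hcy⟩ := hc
    set E := (g.emit (some t)).map Symbol.terminal
    set X := (x.flatMap (g.hom e)).map Symbol.terminal
    set Y := (y.flatMap (g.hom e)).map Symbol.terminal
    calc g.Derives (g.after p) (g.before (some t, true)) := hp.derives_after_before
      _ = E ++ g.after (some t, true) ++ g.after (some t, false) := before_open _
      g.Derives _ (E ++ (X ++ []) ++ g.after (some t, false)) :=
        ((ihx hcx).append_left _).append_right _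
      g.Derives _ (E ++ (X ++ []) ++ (Y ++ g.before q)) := (ihy hcy).append_left _
      _ = _ := by simp [E, X, Y, hom, t]

variable (g) in
/-- `p` may stand just before the encoding of positions `i, i + 1, …` of `r` inside slot `s`. -/
def Precedes (r : g.rules) (i : ℕ) (p : Option g.Pos × Bool) (s : Option g.Pos) : Prop :=
  if h : i < r.1.output.length then g.Adj p (some ⟨r, ⟨i, h⟩⟩, true) else g.Adj p (s, false)

theorem precedes_zero {r : g.rules} {s : Option g.Pos} (hs : g.sym s = .nonterminal r.1.input) :
    g.Precedes r 0 (s, true) s := by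
  unfold Precedes
  split_ifs with h
  · exact .enter r h hs
  · exact .erase r hs (List.eq_nil_of_length_eq_zero (by omega))

theorem precedes_succ {r : g.rules} {i : Fin r.1.output.length} {s : Option g.Pos}
    (hs : g.sym s = .nonterminal r.1.input) : g.Precedes r (i + 1) (some ⟨r, i⟩, false) s := by
  unfold Precedes
  split_ifs with h
  · exact .next r i h
  · exact .exit r i (by omega) hs

variable (g) in
/-- `v` encodes a parse forest for the positions `i, i + 1, …` of `r`. -/
def EncodesFrom (e : g.Pos ≃ Fin k) (r : g.rules) (i : ℕ) (v : List (Fin k × Bool)) : Prop :=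
  DyckK k v ∧ ∀ s p, g.sym s = .nonterminal r.1.input → g.Precedes r i p s →
    List.IsChain g.Adj (p :: v.map (g.lift e) ++ [(s, false)])

theorem encodesFrom_nil (e : g.Pos ≃ Fin k) {r : g.rules} {i : ℕ}
    (hi : r.1.output.length ≤ i) : g.EncodesFrom e r i [] := by
  refine ⟨.nil, fun s p _ hp => ?_⟩
  rw [Precedes, dif_neg (by omega)] at hp
  exact List.isChain_pair.mpr hp

theorem EncodesFrom.cons {e : g.Pos ≃ Fin k} {r : g.rules} {i : Fin r.1.output.length}
    {v₁ v₂ : List (Fin k × Bool)} (hd₁ : DyckK k v₁)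
    (hc₁ : List.IsChain g.Adj
      ((some ⟨r, i⟩, true) :: v₁.map (g.lift e) ++ [(some ⟨r, i⟩, false)]))
    (h₂ : g.EncodesFrom e r (i + 1) v₂) :
    g.EncodesFrom e r i ((e ⟨r, i⟩, true) :: (v₁ ++ (e ⟨r, i⟩, false) :: v₂)) := by
  refine ⟨by simpa using (hd₁.wrap _).append h₂.1, fun s p hs hp => ?_⟩
  rw [Precedes, dif_pos i.2] at hp
  simp only [List.map_cons, List.map_append, lift, Equiv.symm_apply_apply, List.cons_append,
    List.append_assoc]
  rw [List.isChain_cons_cons, List.isChain_cons_split]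
  exact ⟨hp, by simpa [lift] using hc₁, by simpa [lift] using h₂.2 s _ hs (precedes_succ hs)⟩

theorem Yields.exists_encodesFrom (e : g.Pos ≃ Fin k) {u : List (Symbol T g.NT)} {w : List T}
    (h : g.Yields u w) (r : g.rules) (i : ℕ) (hu : r.1.output.drop i = u) :
    ∃ v, g.EncodesFrom e r i v ∧ v.flatMap (g.hom e) = w := by
  induction h generalizing r i with
  | nil => exact ⟨[], encodesFrom_nil e (List.drop_eq_nil_iff.mp hu), rfl⟩
  | terminal a _ ih =>
    obtain ⟨hi, hsym, hu'⟩ := List.exists_of_drop_eq_cons hu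
    have hsym' : g.sym (some ⟨r, ⟨i, hi⟩⟩) = .terminal a := hsym
    obtain ⟨v₂, hv₂, rfl⟩ := ih r (i + 1) hu'
    refine ⟨_, hv₂.cons (v₁ := []) .nil (List.isChain_pair.mpr (.terminal hsym')), ?_⟩
    simp [hom, emit, hsym']
  | nonterminal hr _ _ ih₁ ih₂ =>
    obtain ⟨hi, hsym, hu'⟩ := List.exists_of_drop_eq_cons hu
    have hsym' : g.sym (some ⟨r, ⟨i, hi⟩⟩) = .nonterminal _ := hsym
    obtain ⟨v₁, hv₁, rfl⟩ := ih₁ ⟨_, hr⟩ 0 List.drop_zero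
    obtain ⟨v₂, hv₂, rfl⟩ := ih₂ r (i + 1) hu'
    refine ⟨_, hv₂.cons hv₁.1 (hv₁.2 _ _ hsym' (precedes_zero hsym')), ?_⟩
    simp [hom, emit, hsym']

end ContextFreeGrammar

open ContextFreeGrammar in
theorem Language.IsContextFree.chomsky_schutzenberger {T : Type} {L : Language T}
    (hL : L.IsContextFree) :
    ∃ (k : ℕ) (R : Language (Fin k × Bool)) (f : Fin k × Bool → List T),
      R.IsRegular ∧ L = (fun w => w.flatMap f) '' (R ∩ {w | DyckK k w}) := by
  classical
  obtain ⟨g, rfl⟩ := hL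
  let e := Fintype.equivFin g.Pos
  refine ⟨_, {v | List.IsChain g.Adj ((none, true) :: v.map (g.lift e) ++ [(none, false)])},
    g.hom e, Language.isRegular_setOf_isChain _ _ _ _, Set.ext fun w => ⟨fun hw => ?_, ?_⟩⟩
  · obtain ⟨r, hr, hrS, hy⟩ :=
      (Yields.of_derives ((g.mem_language_iff w).mp hw)).exists_of_nonterminal
    obtain ⟨v, ⟨hd, hc⟩, rfl⟩ := hy.exists_encodesFrom e ⟨r, hr⟩ 0 List.drop_zero
    have hS : g.sym none = .nonterminal r.input := by rw [hrS]; rfl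
    exact ⟨v, ⟨hc none _ hS (precedes_zero hS), hd⟩, rfl⟩
  · rintro ⟨v, ⟨hc, hd⟩, rfl⟩
    exact (g.mem_language_iff _).mpr
      (by simpa [after, before, pending, sym] using derives_of_isChain e hd hc)

/-- (Chomsky–Schützenberger) every language accepted by a pushdown
automaton, i.e. every context-free language `L`, can be written as `h(R ∩ D_k)` for some
regular `R`, Dyck language `D_k`, and free-monoid homomorphism `h` (determined by its
values `f` on letters, acting by `w ↦ w.bind f`); hence every class `C` of languages
containing all regular languages and all Dyck languages, closed under intersection with a
regular language and under homomorphic images, contains all context-free languages. -/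
theorem stmt19 :
    (∀ (T : Type) (L : Language T), L.IsContextFree →
      ∃ (k : ℕ) (R : Language (Fin k × Bool)) (f : Fin k × Bool → List T),
        R.IsRegular ∧ L = (fun w => w.flatMap f) '' (R ∩ {w | DyckK k w})) ∧
    (∀ C : (α : Type) → Language α → Prop,
      (∀ (α : Type) (L : Language α), L.IsRegular → C α L) →
      (∀ k : ℕ, C (Fin k × Bool) {w | DyckK k w}) →
      (∀ (α : Type) (R L : Language α), R.IsRegular → C α L → C α ((R ∩ L : Set (List α)))) →
      (∀ (α β : Type) (f : α → List β) (L : Language α),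
        C α L → C β ((fun w => w.flatMap f) '' L)) →
      ∀ (α : Type) (L : Language α), L.IsContextFree → C α L) := by
  refine ⟨fun _ _ hL => hL.chomsky_schutzenberger, fun C _ hdyck hinter himage α L hL => ?_⟩
  obtain ⟨k, R, f, hR, rfl⟩ := hL.chomsky_schutzenberger
  exact himage _ _ f _ (hinter _ R _ hR (hdyck k))
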